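/- arXiv:1411.0090 — 10 statements merged into one kernel-verified Lean document; each statement's English description precedes it below -/
import Mathlib

section
/- Let K be an ω-Cpo∨-enriched category satisfying left distributivity (k ∘ (f ∨ g) = k∘f ∨ k∘g). Then K admits saturation: for all endomorphisms α : X → X, β : Y → Y and any morphism f : X → Y, if f ∘ α ≤ β ∘ f then f ∘ α* ≤ β* ∘ f, where α* = ⋁_n (id ∨ α)^n is the free monad over α. -/
open CategoryTheory

universe v u

/-- An order enrichment of a category: each hom-set is a poset with binary joins. -/
class HomSup (K : Type u) [Category.{v} K] where
  homSup : ∀ X Y : K, SemilatticeSup (X ⟶ Y)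

attribute [instance] HomSup.homSup

/-- An ω-Cpo∨-enrichment: hom-posets admit suprema of ascending ω-chains,
composition is monotone in each argument and preserves such suprema. -/
class OmegaCpoVee (K : Type u) [Category.{v} K] [HomSup K] where
  csup : ∀ {X Y : K}, (ℕ → (X ⟶ Y)) → (X ⟶ Y)
  csup_isLUB : ∀ {X Y : K} (c : ℕ → (X ⟶ Y)), Monotone c → IsLUB (Set.range c) (csup c)
  comp_mono : ∀ {X Y Z : K} {f f' : X ⟶ Y} {g g' : Y ⟶ Z}, f ≤ f' → g ≤ g' → f ≫ g ≤ f' ≫ g'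
  csup_comp : ∀ {X Y Z : K} (c : ℕ → (X ⟶ Y)) (g : Y ⟶ Z), Monotone c →
    csup c ≫ g = csup fun n => c n ≫ g
  comp_csup : ∀ {X Y Z : K} (f : X ⟶ Y) (c : ℕ → (Y ⟶ Z)), Monotone c →
    f ≫ csup c = csup fun n => f ≫ c n

open OmegaCpoVee

/-- Iterated composition power of an endomorphism. -/
def cpow {K : Type u} [Category.{v} K] {X : K} (f : X ⟶ X) : ℕ → (X ⟶ X)
  | 0 => 𝟙 X
  | n + 1 => cpow f n ≫ f

/-- an ω-Cpo∨-enriched category satisfying left distributivity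
(`k ∘ (f ∨ g) = k∘f ∨ k∘g`, diagrammatically `(f ⊔ g) ≫ k = f ≫ k ⊔ g ≫ k`)
admits saturation: if `f ∘ α ≤ β ∘ f` then `f ∘ α* ≤ β* ∘ f`, where
`α* = ⋁_n (id ∨ α)^n` is the free monad over `α`. -/
theorem leftDistributive_admits_saturation
    {K : Type u} [Category.{v} K] [HomSup K] [OmegaCpoVee K]
    (ld : ∀ {A B C : K} (f g : A ⟶ B) (k : B ⟶ C), (f ⊔ g) ≫ k = f ≫ k ⊔ g ≫ k)
    {X Y : K} (α : X ⟶ X) (β : Y ⟶ Y) (f : X ⟶ Y)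
    (h : α ≫ f ≤ f ≫ β) :
    csup (cpow (𝟙 X ⊔ α)) ≫ f ≤ f ≫ csup (cpow (𝟙 Y ⊔ β)) := by

  -- powers of `𝟙 ⊔ g` form an ascending chain
  have mono : ∀ {Z : K} (g : Z ⟶ Z), Monotone (cpow (𝟙 Z ⊔ g)) := by
    intro Z g
    have step : ∀ n, cpow (𝟙 Z ⊔ g) n ≤ cpow (𝟙 Z ⊔ g) (n+1) := by
      intro n
      have : cpow (𝟙 Z ⊔ g) n ≫ 𝟙 Z ≤ cpow (𝟙 Z ⊔ g) n ≫ (𝟙 Z ⊔ g) :=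
        comp_mono le_rfl le_sup_left
      simpa [cpow] using this
    exact monotone_nat_of_le_succ step
  -- pointwise comparison
  have key : ∀ n, cpow (𝟙 X ⊔ α) n ≫ f ≤ f ≫ cpow (𝟙 Y ⊔ β) n := by
    intro n
    induction n with
    | zero => simp [cpow]
    | succ n ih =>
      have base : (𝟙 X ⊔ α) ≫ f ≤ f ≫ (𝟙 Y ⊔ β) := by
        rw [ld]
        apply sup_le
        · simpa using comp_mono (le_refl f) (le_sup_left : 𝟙 Y ≤ 𝟙 Y ⊔ β)
        · exact le_trans h (comp_mono le_rfl le_sup_right)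
      calc cpow (𝟙 X ⊔ α) (n+1) ≫ f
          = cpow (𝟙 X ⊔ α) n ≫ ((𝟙 X ⊔ α) ≫ f) := by simp [cpow]
        _ ≤ cpow (𝟙 X ⊔ α) n ≫ (f ≫ (𝟙 Y ⊔ β)) := comp_mono le_rfl base
        _ = (cpow (𝟙 X ⊔ α) n ≫ f) ≫ (𝟙 Y ⊔ β) := by simp
        _ ≤ (f ≫ cpow (𝟙 Y ⊔ β) n) ≫ (𝟙 Y ⊔ β) := comp_mono ih le_rfl
        _ = f ≫ cpow (𝟙 Y ⊔ β) (n+1) := by simp [cpow]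
  rw [csup_comp _ _ (mono α)]
  have monoc : Monotone (fun n => cpow (𝟙 X ⊔ α) n ≫ f) :=
    fun a b hab => comp_mono (mono α hab) le_rfl
  apply (csup_isLUB _ monoc).2
  rintro _ ⟨n, rfl⟩
  exact le_trans (key n)
    (comp_mono le_rfl ((csup_isLUB _ (mono β)).1 ⟨n, rfl⟩))
end

section
/- Let K be an ω-Cpo∨-enriched category that is left distributive, and let α : X → X. Then for any f : X → Y, the least solution α*_f of x = f ∨ x ∘ α equals f ∘ α*, where α* = ⋁_n (id ∨ α)^n. Hence in a left distributive category a morphism i is a weak behavioural morphism for α (i.e., there is β with α*_i = β ∘ i) if and only if there is β with i ∘ α* = β ∘ i. -/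
open CategoryTheory

universe v u

open OmegaCpoVee

section Aux
variable {K : Type u} [Category.{v} K] [HomSup K] [OmegaCpoVee K]

lemma cpow_succ' {X : K} (f : X ⟶ X) (n : ℕ) :
    cpow f (n + 1) = f ≫ cpow f n := by
  induction n with
  | zero => simp [cpow]
  | succ n ih =>
    show cpow f (n + 1) ≫ f = f ≫ cpow f (n + 1)
    conv_lhs => rw [ih, Category.assoc]
    rfl

lemma chain_mono {X Y : K} (α : X ⟶ X) (f : X ⟶ Y) :
    Monotone (fun n => (fun x : X ⟶ Y => f ⊔ α ≫ x)^[n] f) := by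
  have hF : Monotone (fun x : X ⟶ Y => f ⊔ α ≫ x) :=
    fun a b h => sup_le_sup_left (comp_mono le_rfl h) f
  apply monotone_nat_of_le_succ
  intro n
  induction n with
  | zero => exact le_sup_left
  | succ n ih =>
    rw [Function.iterate_succ_apply', Function.iterate_succ_apply']
    exact hF ih

lemma cpow_mono {X : K} (α : X ⟶ X) : Monotone (cpow (𝟙 X ⊔ α)) := by
  apply monotone_nat_of_le_succ
  intro n
  calc cpow (𝟙 X ⊔ α) n = cpow (𝟙 X ⊔ α) n ≫ 𝟙 X := by simp
  _ ≤ cpow (𝟙 X ⊔ α) n ≫ (𝟙 X ⊔ α) := comp_mono le_rfl le_sup_left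
  _ = cpow (𝟙 X ⊔ α) (n + 1) := rfl

lemma key {X Y : K}
    (ld : ∀ {A B C : K} (f g : A ⟶ B) (k : B ⟶ C), (f ⊔ g) ≫ k = f ≫ k ⊔ g ≫ k)
    (α : X ⟶ X) (f : X ⟶ Y) (n : ℕ) :
    cpow (𝟙 X ⊔ α) n ≫ f = (fun x : X ⟶ Y => f ⊔ α ≫ x)^[n] f := by
  induction n with
  | zero => simp [cpow]
  | succ n ih =>
    rw [cpow_succ', Category.assoc, ih, ld, Category.id_comp,
      Function.iterate_succ_apply']
    show _ ⊔ _ = f ⊔ α ≫ (fun x : X ⟶ Y => f ⊔ α ≫ x)^[n] f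
    apply le_antisymm
    · refine sup_le (le_trans (chain_mono α f (Nat.le_succ n)) ?_) le_sup_right
      exact le_of_eq (Function.iterate_succ_apply' _ n f)
    · exact sup_le (le_trans (chain_mono α f (Nat.zero_le n)) le_sup_left) le_sup_right

end Aux

/-- in a left distributive ω-Cpo∨-enriched category, for `α : X ⟶ X` and any
`f : X ⟶ Y` the least solution `α*_f = ⋁_n F^n(f)` (with `F(x) = f ∨ x∘α`) of
`x = f ∨ x∘α` equals `f ∘ α* = α* ≫ f` where `α* = ⋁_n (id ∨ α)^n`.  Hence `i` is a weak
behavioural morphism for `α` (there is `β` with `α*_i = β ∘ i`) iff there is `β` with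
`i ∘ α* = β ∘ i`. -/
theorem leastSolution_eq_doubleArrow
    {K : Type u} [Category.{v} K] [HomSup K] [OmegaCpoVee K]
    (ld : ∀ {A B C : K} (f g : A ⟶ B) (k : B ⟶ C), (f ⊔ g) ≫ k = f ≫ k ⊔ g ≫ k)
    {X : K} (α : X ⟶ X) :
    (∀ (Y : K) (f : X ⟶ Y),
      csup (fun n => (fun x : X ⟶ Y => f ⊔ α ≫ x)^[n] f) = csup (cpow (𝟙 X ⊔ α)) ≫ f) ∧
    (∀ (Y : K) (i : X ⟶ Y),
      (∃ β : Y ⟶ Y, csup (fun n => (fun x : X ⟶ Y => i ⊔ α ≫ x)^[n] i) = i ≫ β) ↔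
      (∃ β : Y ⟶ Y, csup (cpow (𝟙 X ⊔ α)) ≫ i = i ≫ β)) := by
  have main : ∀ (Y : K) (f : X ⟶ Y),
      csup (fun n => (fun x : X ⟶ Y => f ⊔ α ≫ x)^[n] f) = csup (cpow (𝟙 X ⊔ α)) ≫ f := by
    intro Y f
    rw [csup_comp _ _ (cpow_mono α)]
    congr 1
    funext n
    exact (key ld α f n).symm
  refine ⟨main, fun Y i => ?_⟩
  rw [main Y i]
end

section
/- Let K be an ω-Cpo∨-enriched category and let J be a subcategory such that K is J-right distributive: (f ∨ g) ∘ h = f∘h ∨ g∘h for all f,g in K and h in J. If i : X → Y in J is a strong behavioural morphism for an endomorphism α : X → X (i.e., i ∘ α = β ∘ i for some β : Y → Y), then α*_i = β*_{id_Y} ∘ i; hence i is a weak behavioural morphism for α. -/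
open CategoryTheory

universe v u

open OmegaCpoVee

/-- let `K` be ω-Cpo∨-enriched, `J` a subcategory (here a morphism property)
such that `K` is `J`-right distributive: `(f ∨ g) ∘ h = f∘h ∨ g∘h` for `h` in `J`.
If `i : X ⟶ Y` in `J` is a strong behavioural morphism for `α` (`i ∘ α = β ∘ i`), then
`α*_i = β*_{id_Y} ∘ i`, where `α*_i = ⋁_n F^n(i)` with `F(x) = i ∨ x∘α` and
`β*_{id_Y} = ⋁_n H^n(id_Y)` with `H(x) = id_Y ∨ x∘β`; hence `i` is a weak behavioural
morphism for `α`. -/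
theorem strong_is_weak_of_JRD
    {K : Type u} [Category.{v} K] [HomSup K] [OmegaCpoVee K]
    (J : MorphismProperty K)
    (jrd : ∀ {A B C : K} (h : A ⟶ B) (f g : B ⟶ C), J h → h ≫ (f ⊔ g) = h ≫ f ⊔ h ≫ g)
    {X Y : K} (i : X ⟶ Y) (hi : J i) (α : X ⟶ X) (β : Y ⟶ Y)
    (hstrong : α ≫ i = i ≫ β) :
    csup (fun n => (fun x : X ⟶ Y => i ⊔ α ≫ x)^[n] i) =
      i ≫ csup (fun n => (fun x : Y ⟶ Y => 𝟙 Y ⊔ β ≫ x)^[n] (𝟙 Y)) ∧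
    ∃ β' : Y ⟶ Y, csup (fun n => (fun x : X ⟶ Y => i ⊔ α ≫ x)^[n] i) = i ≫ β' := by
  set H : (Y ⟶ Y) → (Y ⟶ Y) := fun x => 𝟙 Y ⊔ β ≫ x with hH
  have key : ∀ n, (fun x : X ⟶ Y => i ⊔ α ≫ x)^[n] i = i ≫ H^[n] (𝟙 Y) := by
    intro n
    induction n with
    | zero => simp
    | succ n ih =>
      rw [Function.iterate_succ_apply', Function.iterate_succ_apply', ih]
      show i ⊔ α ≫ (i ≫ H^[n] (𝟙 Y)) = i ≫ (𝟙 Y ⊔ β ≫ H^[n] (𝟙 Y))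
      rw [jrd i _ _ hi, Category.comp_id, ← Category.assoc, ← Category.assoc, hstrong]
  have hmono : Monotone (fun n => H^[n] (𝟙 Y)) := by
    apply monotone_nat_of_le_succ
    intro n
    induction n with
    | zero => exact le_sup_left
    | succ n ih =>
      rw [Function.iterate_succ_apply', Function.iterate_succ_apply']
      exact sup_le_sup_left (comp_mono le_rfl ih) _
  have heq : csup (fun n => (fun x : X ⟶ Y => i ⊔ α ≫ x)^[n] i)
      = i ≫ csup (fun n => H^[n] (𝟙 Y)) := by
    rw [comp_csup i _ hmono]
    congr 1
    funext n
    exact key n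
  exact ⟨heq, _, heq⟩
end

section
/- Let C be a category with binary coproducts, T a monad on C such that Kl(T) has zero morphisms, and F̄ a lifting to Kl(T) of an endofunctor F on C. Then the functor F̄ + Id on Kl(T) carries a monad structure with unit the right coproduct injection inr : Id ⇒ F̄ + Id and multiplication [inl, id] ∘ (F̄([0, id]) + id) : (F̄+Id)² ⇒ F̄+Id; i.e., the unit and associativity laws of a monad hold for these data. -/
open CategoryTheory CategoryTheory.Limits

universe v u

section PlusId

variable {K : Type u} [Category.{v} K] [HasBinaryCoproducts K] [HasZeroMorphisms K]

/-- The functor `F̄ + Id`. -/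
@[simps]
noncomputable def plusId (F : K ⥤ K) : K ⥤ K where
  obj X := F.obj X ⨿ X
  map f := coprod.map (F.map f) f

/-- The unit `inr : Id ⇒ F̄ + Id`. -/
noncomputable def unitP (F : K ⥤ K) (X : K) : X ⟶ (plusId F).obj X :=
  coprod.inr

/-- The multiplication `[inl, id] ∘ (F̄([0,id]) + id) : (F̄+Id)² ⇒ F̄+Id`. -/
noncomputable def multP (F : K ⥤ K) (X : K) : (plusId F).obj ((plusId F).obj X) ⟶ (plusId F).obj X :=
  coprod.map (F.map (coprod.desc 0 (𝟙 X))) (𝟙 ((plusId F).obj X)) ≫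
    coprod.desc coprod.inl (𝟙 ((plusId F).obj X))

end PlusId

/-!
The map `zeroIdP = [0, id] : F̄X + X ⟶ X` is natural, because zero morphisms absorb
composition, and it intertwines the multiplication: `μ ≫ [0, id] = [0, id] ≫ [0, id]`.
Each monad law is then checked summand by summand; on the `inl` summand it becomes `F̄`
applied to one of these two facts about `[0, id]`.
-/
section PlusIdMonad

variable {K : Type u} [Category.{v} K] [HasBinaryCoproducts K] (F : K ⥤ K)

/- Typing `coprod.inl` into `(plusId F).obj X` instead of `F.obj X ⨿ X` keeps composites with
`multP` and `(plusId F).map` type-correct up to reducible unfolding, so `simp` and `rw` apply. -/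
noncomputable def inlP (X : K) : F.obj X ⟶ (plusId F).obj X :=
  coprod.inl

theorem plusId_hom_ext {X Y : K} {f g : (plusId F).obj X ⟶ Y}
    (hl : inlP F X ≫ f = inlP F X ≫ g) (hr : unitP F X ≫ f = unitP F X ≫ g) : f = g :=
  coprod.hom_ext hl hr

theorem inlP_map {X Y : K} (f : X ⟶ Y) : inlP F X ≫ (plusId F).map f = F.map f ≫ inlP F Y :=
  coprod.inl_map _ _

theorem unitP_naturality {X Y : K} (f : X ⟶ Y) :
    unitP F X ≫ (plusId F).map f = f ≫ unitP F Y :=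
  coprod.inr_map _ _

variable [HasZeroMorphisms K]

noncomputable def zeroIdP (X : K) : (plusId F).obj X ⟶ X :=
  coprod.desc 0 (𝟙 X)

theorem inlP_zeroIdP (X : K) : inlP F X ≫ zeroIdP F X = 0 :=
  coprod.inl_desc _ _

theorem unitP_zeroIdP (X : K) : unitP F X ≫ zeroIdP F X = 𝟙 X :=
  coprod.inr_desc _ _

theorem inlP_multP (X : K) :
    inlP F ((plusId F).obj X) ≫ multP F X = F.map (zeroIdP F X) ≫ inlP F X :=
  (coprod.inl_map_assoc _ _ _).trans (congrArg (_ ≫ ·) (coprod.inl_desc _ _))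

theorem unitP_multP (X : K) : unitP F ((plusId F).obj X) ≫ multP F X = 𝟙 _ :=
  (coprod.inr_map_assoc _ _ _).trans ((Category.id_comp _).trans (coprod.inr_desc _ _))

theorem zeroIdP_naturality {X Y : K} (f : X ⟶ Y) :
    (plusId F).map f ≫ zeroIdP F Y = zeroIdP F X ≫ f := by
  apply plusId_hom_ext
  · simp only [reassoc_of% inlP_map, reassoc_of% inlP_zeroIdP, inlP_zeroIdP, comp_zero, zero_comp]
  · simp only [reassoc_of% unitP_naturality, reassoc_of% unitP_zeroIdP, unitP_zeroIdP,
      Category.comp_id]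

theorem multP_naturality {X Y : K} (f : X ⟶ Y) :
    multP F X ≫ (plusId F).map f = (plusId F).map ((plusId F).map f) ≫ multP F Y := by
  apply plusId_hom_ext
  · simp only [reassoc_of% inlP_multP, reassoc_of% inlP_map, inlP_multP, inlP_map,
      ← F.map_comp_assoc, zeroIdP_naturality]
  · simp only [reassoc_of% unitP_multP, reassoc_of% unitP_naturality, unitP_multP,
      Category.comp_id]

theorem map_unitP_multP (X : K) : (plusId F).map (unitP F X) ≫ multP F X = 𝟙 _ := by
  apply plusId_hom_ext
  · simp only [reassoc_of% inlP_map, inlP_multP, ← F.map_comp_assoc, unitP_zeroIdP, F.map_id,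
      Category.id_comp, Category.comp_id]
  · simp only [reassoc_of% unitP_naturality, unitP_multP, Category.comp_id]

theorem multP_zeroIdP (X : K) :
    multP F X ≫ zeroIdP F X = zeroIdP F _ ≫ zeroIdP F X := by
  apply plusId_hom_ext
  · simp only [reassoc_of% inlP_multP, reassoc_of% inlP_zeroIdP, inlP_zeroIdP, comp_zero,
      zero_comp]
  · simp only [reassoc_of% unitP_multP, reassoc_of% unitP_zeroIdP]

theorem multP_assoc (X : K) :
    multP F ((plusId F).obj X) ≫ multP F X = (plusId F).map (multP F X) ≫ multP F X := by
  apply plusId_hom_ext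
  · simp only [reassoc_of% inlP_multP, reassoc_of% inlP_map, inlP_multP, ← F.map_comp_assoc,
      multP_zeroIdP]
  · simp only [reassoc_of% unitP_multP, reassoc_of% unitP_naturality, unitP_multP,
      Category.comp_id]

end PlusIdMonad

theorem plusId_monad_laws_general
    {C : Type u} [Category.{v} C]
    (T : Monad C)
    [HasBinaryCoproducts (Kleisli T)] [HasZeroMorphisms (Kleisli T)]
    (Fbar : Kleisli T ⥤ Kleisli T) :
    (∀ {X Y : Kleisli T} (f : X ⟶ Y),
      unitP Fbar X ≫ (plusId Fbar).map f = f ≫ unitP Fbar Y) ∧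
    (∀ {X Y : Kleisli T} (f : X ⟶ Y),
      multP Fbar X ≫ (plusId Fbar).map f =
        (plusId Fbar).map ((plusId Fbar).map f) ≫ multP Fbar Y) ∧
    (∀ X : Kleisli T, unitP Fbar ((plusId Fbar).obj X) ≫ multP Fbar X = 𝟙 _) ∧
    (∀ X : Kleisli T, (plusId Fbar).map (unitP Fbar X) ≫ multP Fbar X = 𝟙 _) ∧
    (∀ X : Kleisli T,
      multP Fbar ((plusId Fbar).obj X) ≫ multP Fbar X =
        (plusId Fbar).map (multP Fbar X) ≫ multP Fbar X) :=
  ⟨unitP_naturality Fbar, multP_naturality Fbar, unitP_multP Fbar, map_unitP_multP Fbar,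
    multP_assoc Fbar⟩

/-- let `C` have binary coproducts, `T` a monad on `C` such that the Kleisli
category `Kl(T)` has zero morphisms (and inherits binary coproducts), and let `F̄` be a
lifting to `Kl(T)` of an endofunctor `F` on `C` (i.e. `(−)♯ ⋙ F̄ = F ⋙ (−)♯`).  Then
`F̄ + Id` carries a monad structure on `Kl(T)` with unit the coproduct injection `inr` and
multiplication `[inl, id] ∘ (F̄([0,id]) + id)`: both transformations are natural and the
monad unit and associativity laws hold. -/
theorem plusId_monad_laws
    {C : Type u} [Category.{v} C] [HasBinaryCoproducts C]
    (T : Monad C)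
    [HasBinaryCoproducts (Kleisli T)] [HasZeroMorphisms (Kleisli T)]
    (F : C ⥤ C) (Fbar : Kleisli T ⥤ Kleisli T)
    (hlift : Kleisli.Adjunction.toKleisli T ⋙ Fbar = F ⋙ Kleisli.Adjunction.toKleisli T) :
    (∀ {X Y : Kleisli T} (f : X ⟶ Y),
      unitP Fbar X ≫ (plusId Fbar).map f = f ≫ unitP Fbar Y) ∧
    (∀ {X Y : Kleisli T} (f : X ⟶ Y),
      multP Fbar X ≫ (plusId Fbar).map f =
        (plusId Fbar).map ((plusId Fbar).map f) ≫ multP Fbar Y) ∧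
    (∀ X : Kleisli T, unitP Fbar ((plusId Fbar).obj X) ≫ multP Fbar X = 𝟙 _) ∧
    (∀ X : Kleisli T, (plusId Fbar).map (unitP Fbar X) ≫ multP Fbar X = 𝟙 _) ∧
    (∀ X : Kleisli T,
      multP Fbar ((plusId Fbar).obj X) ≫ multP Fbar X =
        (plusId Fbar).map (multP Fbar X) ≫ multP Fbar X) :=
  plusId_monad_laws_general T Fbar
end

section
/- Let K be a small ω-Cpo∨-enriched category and let K̃ = Lax(K, ωCpo∨)_opl be the category of lax functors K → ωCpo∨ with oplax natural transformations, ordered componentwise and pointwise. Then K̃ is ω-Cpo∨-enriched: hom-posets admit binary joins (computed componentwise: (φ ∨ ψ)_Y(y) = φ_Y(y) ∨ ψ_Y(y), which is again an oplax transformation) and suprema of ascending ω-chains, and K̃ satisfies right distributivity: (φ ∨ ψ) ∘ χ = φ∘χ ∨ ψ∘χ. -/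
open CategoryTheory

universe v u

open OmegaCpoVee

/-- An object of ωCpo∨: a poset with binary joins and suprema of ascending ω-chains. -/
structure OCV : Type (u + 1) where
  carrier : Type u
  [sl : SemilatticeSup carrier]
  csup : (ℕ → carrier) → carrier
  csup_isLUB : ∀ c : ℕ → carrier, Monotone c → IsLUB (Set.range c) (csup c)

attribute [instance] OCV.sl

/-- A lax ωCpo∨-presheaf on `K`: a lax functor `K → ωCpo∨`
(morphisms of ωCpo∨ are monotone and preserve chain suprema). -/
structure LaxPresheaf (K : Type u) [Category.{v} K] [HomSup K] [OmegaCpoVee K] where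
  obj : K → OCV.{u}
  map : ∀ {X Y : K}, (X ⟶ Y) → (obj X).carrier → (obj Y).carrier
  map_mono : ∀ {X Y : K} (f : X ⟶ Y), Monotone (map f)
  map_cont : ∀ {X Y : K} (f : X ⟶ Y) (c : ℕ → (obj X).carrier), Monotone c →
    map f ((obj X).csup c) = (obj Y).csup fun n => map f (c n)
  lax_comp : ∀ {X Y Z : K} (g : X ⟶ Y) (f : Y ⟶ Z) (x : (obj X).carrier),
    map f (map g x) ≤ map (g ≫ f) x
  lax_id : ∀ {X : K} (x : (obj X).carrier), x ≤ map (𝟙 X) x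

/-- An oplax natural transformation between lax ωCpo∨-presheaves. -/
structure OplaxTrans {K : Type u} [Category.{v} K] [HomSup K] [OmegaCpoVee K]
    (F G : LaxPresheaf K) where
  app : ∀ Y : K, (F.obj Y).carrier → (G.obj Y).carrier
  app_mono : ∀ Y : K, Monotone (app Y)
  app_cont : ∀ (Y : K) (c : ℕ → (F.obj Y).carrier), Monotone c →
    app Y ((F.obj Y).csup c) = (G.obj Y).csup fun n => app Y (c n)
  oplax : ∀ {Y Y' : K} (f : Y ⟶ Y') (x : (F.obj Y).carrier),
    app Y' (F.map f x) ≤ G.map f (app Y x)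

variable {K : Type u} [Category.{v} K] [HomSup K] [OmegaCpoVee K]

/-- The componentwise (pointwise) order on oplax transformations. -/
def OplaxTrans.le {F G : LaxPresheaf K} (φ ψ : OplaxTrans F G) : Prop :=
  ∀ (Y : K) (y : (F.obj Y).carrier), φ.app Y y ≤ ψ.app Y y

/-- Componentwise composition of oplax transformations. -/
noncomputable def OplaxTrans.comp {E F G : LaxPresheaf K}
    (φ : OplaxTrans F G) (χ : OplaxTrans E F) : OplaxTrans E G where
  app Y x := φ.app Y (χ.app Y x)
  app_mono Y := (φ.app_mono Y).comp (χ.app_mono Y)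
  app_cont Y c hc := by
    show φ.app Y (χ.app Y ((E.obj Y).csup c)) = _
    rw [χ.app_cont Y c hc, φ.app_cont Y _ (fun m n hmn => (χ.app_mono Y) (hc hmn))]
  oplax {Y Y'} f x :=
    le_trans (φ.app_mono Y' (χ.oplax f x)) (φ.oplax f (χ.app Y x))

namespace OCVAux

variable {A : OCV.{u}}

lemma le_csup {c : ℕ → A.carrier} (hc : Monotone c) (n : ℕ) : c n ≤ A.csup c :=
  (A.csup_isLUB c hc).1 ⟨n, rfl⟩

lemma csup_le {c : ℕ → A.carrier} (hc : Monotone c) {x : A.carrier}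
    (h : ∀ n, c n ≤ x) : A.csup c ≤ x :=
  (A.csup_isLUB c hc).2 (by rintro _ ⟨n, rfl⟩; exact h n)

lemma csup_mono {c d : ℕ → A.carrier} (hc : Monotone c) (hd : Monotone d)
    (h : ∀ n, c n ≤ d n) : A.csup c ≤ A.csup d :=
  csup_le hc fun n => (h n).trans (le_csup hd n)

lemma csup_sup {a b : ℕ → A.carrier} (ha : Monotone a) (hb : Monotone b) :
    A.csup (fun n => a n ⊔ b n) = A.csup a ⊔ A.csup b := by
  have hab : Monotone fun n => a n ⊔ b n := fun m n h => sup_le_sup (ha h) (hb h)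
  apply le_antisymm
  · exact csup_le hab fun n => sup_le_sup (le_csup ha n) (le_csup hb n)
  · exact sup_le (csup_mono ha hab fun n => le_sup_left)
      (csup_mono hb hab fun n => le_sup_right)

lemma csup_swap (x : ℕ → ℕ → A.carrier)
    (h1 : ∀ m, Monotone (x m)) (h2 : ∀ n, Monotone fun m => x m n) :
    A.csup (fun n => A.csup (x n)) = A.csup (fun k => x k k) := by
  have hdiag : Monotone fun k => x k k := fun i j hij =>
    le_trans (h1 i hij) (h2 j hij)
  have houter : Monotone fun n => A.csup (x n) := fun i j hij =>
    csup_mono (h1 i) (h1 j) fun m => h2 m hij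
  apply le_antisymm
  · refine csup_le houter fun n => csup_le (h1 n) fun m => ?_
    calc x n m ≤ x (max n m) (max n m) :=
          le_trans (h1 n (le_max_right n m)) (h2 _ (le_max_left n m))
      _ ≤ _ := le_csup hdiag _
  · exact csup_le hdiag fun k => le_trans (le_csup (h1 k) k) (le_csup houter k)

end OCVAux

lemma chain_mono_s8 {F G : LaxPresheaf K} (c : ℕ → OplaxTrans F G)
    (hc : ∀ n : ℕ, (c n).le (c (n + 1))) (Y : K) (y : (F.obj Y).carrier) :
    Monotone fun n => (c n).app Y y := by
  have step : ∀ n, (c n).app Y y ≤ (c (n + 1)).app Y y := fun n => hc n Y y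
  exact monotone_nat_of_le_succ step

/-- `K̃ = Lax(K, ωCpo∨)_opl` is ω-Cpo∨-enriched: hom-posets admit binary
joins, computed componentwise (the componentwise join is again an oplax transformation and
is the least upper bound), and suprema of ascending ω-chains (again componentwise); and it
satisfies right distributivity `(φ ∨ ψ) ∘ χ = φ∘χ ∨ ψ∘χ`. -/
theorem laxPresheaves_omegaCpoVee_and_RD (F G : LaxPresheaf K) :
    (∀ φ ψ : OplaxTrans F G,
      ∃ j : OplaxTrans F G,
        (∀ (Y : K) (y : (F.obj Y).carrier), j.app Y y = φ.app Y y ⊔ ψ.app Y y) ∧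
        φ.le j ∧ ψ.le j ∧ (∀ ρ : OplaxTrans F G, φ.le ρ → ψ.le ρ → j.le ρ)) ∧
    (∀ c : ℕ → OplaxTrans F G, (∀ n : ℕ, (c n).le (c (n + 1))) →
      ∃ s : OplaxTrans F G,
        (∀ (Y : K) (y : (F.obj Y).carrier),
          s.app Y y = (G.obj Y).csup fun n => (c n).app Y y) ∧
        (∀ n, (c n).le s) ∧ (∀ ρ : OplaxTrans F G, (∀ n, (c n).le ρ) → s.le ρ)) ∧
    (∀ (E : LaxPresheaf K) (χ : OplaxTrans E F) (φ ψ j : OplaxTrans F G),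
      (∀ (Y : K) (y : (F.obj Y).carrier), j.app Y y = φ.app Y y ⊔ ψ.app Y y) →
      ∀ (Y : K) (y : (E.obj Y).carrier),
        (j.comp χ).app Y y = (φ.comp χ).app Y y ⊔ (ψ.comp χ).app Y y) := by
  open OCVAux in
  refine ⟨?_, ?_, ?_⟩
  · intro φ ψ
    refine ⟨{ app := fun Y y => φ.app Y y ⊔ ψ.app Y y
              app_mono := fun Y a b h => sup_le_sup (φ.app_mono Y h) (ψ.app_mono Y h)
              app_cont := ?_
              oplax := ?_ }, fun Y y => rfl, fun Y y => le_sup_left,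
            fun Y y => le_sup_right, fun ρ h1 h2 Y y => sup_le (h1 Y y) (h2 Y y)⟩
    · intro Y c hc
      simp only [φ.app_cont Y c hc, ψ.app_cont Y c hc]
      exact (csup_sup (fun i j h => φ.app_mono Y (hc h))
        (fun i j h => ψ.app_mono Y (hc h))).symm
    · intro Y Y' f x
      exact sup_le ((φ.oplax f x).trans (G.map_mono f le_sup_left))
        ((ψ.oplax f x).trans (G.map_mono f le_sup_right))
  · intro c hc
    have hm := chain_mono_s8 c hc
    refine ⟨{ app := fun Y y => (G.obj Y).csup fun n => (c n).app Y y
              app_mono := fun Y a b h =>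
                csup_mono (hm Y a) (hm Y b) fun n => (c n).app_mono Y h
              app_cont := ?_
              oplax := ?_ }, fun Y y => rfl,
            fun n Y y => le_csup (hm Y y) n,
            fun ρ h Y y => csup_le (hm Y y) fun n => h n Y y⟩
    · intro Y d hd
      simp only [fun n => (c n).app_cont Y d hd]
      rw [csup_swap (fun n m => (c n).app Y (d m))
          (fun n i j h => (c n).app_mono Y (hd h)) (fun m => hm Y (d m)),
        csup_swap (fun m n => (c n).app Y (d m))
          (fun m => hm Y (d m)) (fun n i j h => (c n).app_mono Y (hd h))]
    · intro Y Y' f x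
      rw [G.map_cont f _ (hm Y x)]
      exact csup_mono (hm Y' (F.map f x))
        (fun i j h => G.map_mono f (hm Y x h))
        fun n => (c n).oplax f x
  · intro E χ φ ψ j hj Y y
    exact hj Y (χ.app Y y)
end

section
/- Let K be a small ω-Cpo∨-enriched category, X̂ = K(X,−) the representable lax presheaf, and for i : X → X' let î : X̂ → X̂' be the oplax transformation g ↦ g ∘ i. Then for any objects X, Y the monotone map (−)^ : K(X,Y) → K̃ᵒᵖ(X̂,Ŷ), g ↦ ĝ, has a left adjoint Θ_{X,Y} given by Θ(φ) = φ_Y(id_Y); that is, Θ(φ) ≤ g if and only if φ ≤ ĝ, for all g ∈ K(X,Y) and oplax transformations φ : Ŷ → X̂. -/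
open CategoryTheory

universe v u

open OmegaCpoVee

/-- An oplax natural transformation between the representable lax presheaves
`Ŷ = K(Y,−)` and `X̂ = K(X,−)`, i.e. a morphism `X̂ → Ŷ` in `K̃ᵒᵖ`: components
`φ_Z : K(Y,Z) → K(X,Z)` are monotone, preserve chain suprema, and satisfy
`φ_{Z'}(f∘g) ≤ f ∘ φ_Z(g)`. -/
structure RepOplax (K : Type u) [Category.{v} K] [HomSup K] [OmegaCpoVee K]
    (Y X : K) where
  app : ∀ Z : K, (Y ⟶ Z) → (X ⟶ Z)
  mono : ∀ Z : K, Monotone (app Z)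
  cont : ∀ (Z : K) (c : ℕ → (Y ⟶ Z)), Monotone c →
    app Z (csup c) = csup fun n => app Z (c n)
  oplax : ∀ {Z Z' : K} (f : Z ⟶ Z') (g : Y ⟶ Z), app Z' (g ≫ f) ≤ app Z g ≫ f

variable {K : Type u} [Category.{v} K] [HomSup K] [OmegaCpoVee K]

/-- The embedding `K → K̃ᵒᵖ` on morphisms: `î : X̂ → Ŷ` for `i : X ⟶ Y` is `g ↦ i ≫ g`. -/
def hat {X Y : K} (i : X ⟶ Y) : RepOplax K Y X where
  app _Z g := i ≫ g
  mono _Z _a _b hab := OmegaCpoVee.comp_mono (le_refl i) hab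
  cont Z c hc := OmegaCpoVee.comp_csup i c hc
  oplax f g := le_of_eq (Category.assoc i g f).symm

/-- Pointwise order on representable oplax transformations. -/
def RepOplax.le {X Y : K} (φ ψ : RepOplax K Y X) : Prop :=
  ∀ (Z : K) (g : Y ⟶ Z), φ.app Z g ≤ ψ.app Z g

/-- The identity transformation on `X̂`. -/
def RepOplax.idT (X : K) : RepOplax K X X where
  app _Z g := g
  mono _Z := monotone_id
  cont _Z _c _hc := rfl
  oplax _f _g := le_refl _

/-- Composition of endo-transformations on `X̂` (composition in `K̃ᵒᵖ`). -/
def RepOplax.comp {X : K} (φ ψ : RepOplax K X X) : RepOplax K X X where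
  app Z g := φ.app Z (ψ.app Z g)
  mono Z := (φ.mono Z).comp (ψ.mono Z)
  cont Z c hc := by
    show φ.app Z (ψ.app Z (csup c)) = _
    rw [ψ.cont Z c hc, φ.cont Z _ (fun m n hmn => (ψ.mono Z) (hc hmn))]
  oplax {Z Z'} f g :=
    le_trans ((φ.mono Z') (ψ.oplax f g)) (φ.oplax f (ψ.app Z g))

/-- the monotone map `(−)^ : K(X,Y) → K̃ᵒᵖ(X̂,Ŷ)`, `g ↦ ĝ`, has a left
adjoint `Θ` given by `Θ(φ) = φ_Y(id_Y)`: for all `g : X ⟶ Y` and oplax transformations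
`φ : Ŷ → X̂`, `Θ(φ) ≤ g` iff `φ ≤ ĝ`. -/
theorem theta_left_adjoint_of_hat
    {X Y : K} (g : X ⟶ Y) (φ : RepOplax K Y X) :
    φ.app Y (𝟙 Y) ≤ g ↔ φ.le (hat g) := by
  constructor
  · intro h Z f
    have := φ.oplax f (𝟙 Y)
    rw [Category.id_comp] at this
    exact le_trans this (le_trans (comp_mono h (le_refl f)) (le_refl _))
  · intro h
    have := h Y (𝟙 Y)
    simpa [hat] using this
end

section
/- Let K be a small ω-Cpo∨-enriched category, α : X → X an endomorphism, and α̂ its image in K̃ᵒᵖ under the representable embedding. Then the free monad α̂* over α̂ in K̃ᵒᵖ satisfies α̂*(f) = α*_f for every f : X → Y, where α*_f is the least solution in K of x = f ∨ x ∘ α. -/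
open CategoryTheory

universe v u

open OmegaCpoVee

variable {K : Type u} [Category.{v} K] [HomSup K] [OmegaCpoVee K]

section Aux

lemma le_csup' {X Y : K} {c : ℕ → (X ⟶ Y)} (hc : Monotone c) (n : ℕ) : c n ≤ csup c :=
  (csup_isLUB c hc).1 ⟨n, rfl⟩

lemma csup_le' {X Y : K} {c : ℕ → (X ⟶ Y)} (hc : Monotone c) {x : X ⟶ Y}
    (h : ∀ n, c n ≤ x) : csup c ≤ x :=
  (csup_isLUB c hc).2 (by rintro _ ⟨n, rfl⟩; exact h n)

lemma csup_mono' {X Y : K} {c d : ℕ → (X ⟶ Y)} (hc : Monotone c) (hd : Monotone d)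
    (h : ∀ n, c n ≤ d n) : csup c ≤ csup d :=
  csup_le' hc fun n => (h n).trans (le_csup' hd n)

lemma csup_sup' {X Y : K} {c d : ℕ → (X ⟶ Y)} (hc : Monotone c) (hd : Monotone d) :
    csup c ⊔ csup d = csup (fun n => c n ⊔ d n) := by
  have hcd : Monotone fun n => c n ⊔ d n := fun m n h => sup_le_sup (hc h) (hd h)
  apply le_antisymm
  · exact sup_le (csup_mono' hc hcd fun n => le_sup_left)
      (csup_mono' hd hcd fun n => le_sup_right)
  · exact csup_le' hcd fun n => sup_le_sup (le_csup' hc n) (le_csup' hd n)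

lemma csup_diag {X Y : K} {a : ℕ → ℕ → (X ⟶ Y)}
    (h : ∀ ⦃n n' m m'⦄, n ≤ n' → m ≤ m' → a n m ≤ a n' m') :
    csup (fun n => csup (a n)) = csup (fun k => a k k) := by
  have hrow : ∀ n, Monotone (a n) := fun n _ _ hm => h le_rfl hm
  have hdiag : Monotone fun k => a k k := fun _ _ hk => h hk hk
  have houter : Monotone fun n => csup (a n) :=
    fun m n hmn => csup_mono' (hrow m) (hrow n) fun k => h hmn le_rfl
  apply le_antisymm
  · refine csup_le' houter fun n => csup_le' (hrow n) fun m => ?_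
    exact (h (le_max_left n m) (le_max_right n m)).trans (le_csup' hdiag (max n m))
  · exact csup_le' hdiag fun k => (le_csup' (hrow k) k).trans (le_csup' houter k)

variable {X : K} (α : X ⟶ X)

/-- The iteration chain `F^n(f)` with `F(x) = f ⊔ α ≫ x`. -/
def sChain {Y : K} (f : X ⟶ Y) : ℕ → (X ⟶ Y) :=
  fun n => (fun x : X ⟶ Y => f ⊔ α ≫ x)^[n] f

lemma sChain_succ {Y : K} (f : X ⟶ Y) (n : ℕ) :
    sChain α f (n + 1) = f ⊔ α ≫ sChain α f n := by
  simp [sChain, Function.iterate_succ_apply']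

lemma sChain_le_sChain {Y : K} {f g : X ⟶ Y} (h : f ≤ g) (n : ℕ) :
    sChain α f n ≤ sChain α g n := by
  induction n with
  | zero => exact h
  | succ n ih =>
    rw [sChain_succ, sChain_succ]
    exact sup_le_sup h (comp_mono le_rfl ih)

lemma sChain_mono {Y : K} (f : X ⟶ Y) : Monotone (sChain α f) := by
  apply monotone_nat_of_le_succ
  intro n
  induction n with
  | zero => rw [sChain_succ]; exact le_sup_left
  | succ n ih =>
    calc sChain α f (n + 1) = f ⊔ α ≫ sChain α f n := sChain_succ α f n
      _ ≤ f ⊔ α ≫ sChain α f (n + 1) := sup_le_sup le_rfl (comp_mono le_rfl ih)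
      _ = sChain α f (n + 2) := (sChain_succ α f (n + 1)).symm

/-- The saturation `α*_f = ⋁_n F^n(f)`. -/
def sSat {Y : K} (f : X ⟶ Y) : X ⟶ Y := csup (sChain α f)

lemma le_sSat {Y : K} (f : X ⟶ Y) : f ≤ sSat α f :=
  le_csup' (sChain_mono α f) 0

lemma sChain_le_sSat {Y : K} (f : X ⟶ Y) (n : ℕ) : sChain α f n ≤ sSat α f :=
  le_csup' (sChain_mono α f) n

lemma comp_le_sSat {Y : K} (f : X ⟶ Y) : α ≫ f ≤ sSat α f := by
  have h : α ≫ f ≤ sChain α f 1 := by rw [sChain_succ]; exact le_sup_right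
  exact h.trans (sChain_le_sSat α f 1)

lemma sSat_mono {Y : K} : Monotone (sSat α (Y := Y)) := fun f g h =>
  csup_mono' (sChain_mono α f) (sChain_mono α g) fun n => sChain_le_sChain α h n

lemma comp_sSat_le {Y : K} (f : X ⟶ Y) : α ≫ sSat α f ≤ sSat α f := by
  rw [sSat, comp_csup α _ (sChain_mono α f)]
  refine csup_le' (fun m n h => comp_mono le_rfl (sChain_mono α f h)) fun n => ?_
  have h : α ≫ sChain α f n ≤ sChain α f (n + 1) := by
    rw [sChain_succ]; exact le_sup_right
  exact h.trans (sChain_le_sSat α f (n + 1))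

lemma sSat_le_of_prefixed {Y : K} {f x : X ⟶ Y} (h1 : f ≤ x) (h2 : α ≫ x ≤ x) :
    sSat α f ≤ x := by
  refine csup_le' (sChain_mono α f) fun n => ?_
  induction n with
  | zero => exact h1
  | succ n ih =>
    rw [sChain_succ]
    exact sup_le h1 ((comp_mono le_rfl ih).trans h2)

lemma sSat_idem {Y : K} (f : X ⟶ Y) : sSat α (sSat α f) ≤ sSat α f :=
  sSat_le_of_prefixed α le_rfl (comp_sSat_le α f)

lemma sChain_comp {Y Z : K} (g : X ⟶ Y) (h : Y ⟶ Z) (n : ℕ) :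
    sChain α (g ≫ h) n ≤ sChain α g n ≫ h := by
  induction n with
  | zero => exact le_rfl
  | succ n ih =>
    rw [sChain_succ, sChain_succ]
    refine sup_le (comp_mono le_sup_left le_rfl) ?_
    calc α ≫ sChain α (g ≫ h) n ≤ α ≫ (sChain α g n ≫ h) := comp_mono le_rfl ih
      _ = (α ≫ sChain α g n) ≫ h := (Category.assoc _ _ _).symm
      _ ≤ (g ⊔ α ≫ sChain α g n) ≫ h := comp_mono le_sup_right le_rfl

lemma sSat_comp {Y Z : K} (g : X ⟶ Y) (h : Y ⟶ Z) :
    sSat α (g ≫ h) ≤ sSat α g ≫ h :=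
  csup_le' (sChain_mono α (g ≫ h)) fun n =>
    (sChain_comp α g h n).trans (comp_mono (sChain_le_sSat α g n) le_rfl)

lemma sChain_csup {Y : K} (c : ℕ → (X ⟶ Y)) (hc : Monotone c) (n : ℕ) :
    sChain α (csup c) n = csup (fun m => sChain α (c m) n) := by
  induction n with
  | zero => rfl
  | succ n ih =>
    have hm : Monotone fun m => sChain α (c m) n := fun p q h => sChain_le_sChain α (hc h) n
    have hm' : Monotone fun m => α ≫ sChain α (c m) n := fun p q h => comp_mono le_rfl (hm h)
    rw [sChain_succ, ih, comp_csup α _ hm, csup_sup' hc hm']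
    exact congrArg csup (funext fun m => (sChain_succ α (c m) n).symm)

lemma sSat_cont {Y : K} (c : ℕ → (X ⟶ Y)) (hc : Monotone c) :
    sSat α (csup c) = csup fun m => sSat α (c m) := by
  have hmn : ∀ ⦃n n' m m'⦄, n ≤ n' → m ≤ m' → sChain α (c m) n ≤ sChain α (c m') n' :=
    fun n n' m m' hn hm => (sChain_le_sChain α (hc hm) n).trans (sChain_mono α (c m') hn)
  have hmn' : ∀ ⦃n n' m m'⦄, n ≤ n' → m ≤ m' → sChain α (c n) m ≤ sChain α (c n') m' :=
    fun n n' m m' hn hm => hmn hm hn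
  calc sSat α (csup c) = csup (fun n => csup fun m => sChain α (c m) n) :=
        congrArg csup (funext fun n => sChain_csup α c hc n)
    _ = csup (fun k => sChain α (c k) k) := csup_diag hmn
    _ = csup fun m => sSat α (c m) := (csup_diag hmn').symm

end Aux

/-- for an endomorphism `α : X ⟶ X`, the free monad `α̂*` over `α̂ = hat α`
in `K̃ᵒᵖ` exists (a least transformation `ρ` with `id ≤ ρ`, `ρ∘ρ ≤ ρ`, `α̂ ≤ ρ`), and it
satisfies `α̂*(f) = α*_f` for every `f : X ⟶ Y`, where `α*_f = ⋁_n F^n(f)` with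
`F(x) = f ∨ x∘α` is the least solution of `x = f ∨ x∘α` in `K`. -/
theorem free_monad_on_representable_is_pointwise_saturation
    {X : K} (α : X ⟶ X) :
    ∃ ρ : RepOplax K X X,
      ((RepOplax.idT X).le ρ ∧ (ρ.comp ρ).le ρ ∧ (hat α).le ρ ∧
        ∀ σ : RepOplax K X X,
          (RepOplax.idT X).le σ → (σ.comp σ).le σ → (hat α).le σ → ρ.le σ) ∧
      ∀ (Y : K) (f : X ⟶ Y),
        ρ.app Y f = csup fun n => (fun x : X ⟶ Y => f ⊔ α ≫ x)^[n] f := by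
  refine ⟨{ app := fun Y f => sSat α f
            mono := fun Y => sSat_mono α
            cont := fun Y c hc => sSat_cont α c hc
            oplax := fun {Z Z'} f g => sSat_comp α g f }, ⟨?_, ?_, ?_, ?_⟩, fun Y f => rfl⟩
  · exact fun Z g => le_sSat α g
  · exact fun Z g => sSat_idem α g
  · exact fun Z g => comp_le_sSat α g
  · intro σ hid hcomp hα Z g
    refine csup_le' (sChain_mono α g) fun n => ?_
    induction n with
    | zero => exact hid Z g
    | succ n ih =>
      rw [sChain_succ]
      refine sup_le (hid Z g) ?_
      calc α ≫ sChain α g n ≤ α ≫ σ.app Z g := comp_mono le_rfl ih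
        _ ≤ σ.app Z (σ.app Z g) := hα Z (σ.app Z g)
        _ ≤ σ.app Z g := hcomp Z g
end

section
/- Let K be a small ω-Cpo∨-enriched category and α : X → X, i : X → Y morphisms. Then Θ(î ∘ α̂*) = α*_i, where Θ is the left adjoint Θ(φ) = φ_Y(id_Y), α̂* the free monad over α̂ in K̃ᵒᵖ, and α*_i the least solution of x = i ∨ x ∘ α. Consequently i is a weak behavioural morphism for α (via saturation in K̃ᵒᵖ) iff there is β : Y → Y with α*_i = β ∘ i. -/
open CategoryTheory

universe v u

open OmegaCpoVee

variable {K : Type u} [Category.{v} K] [HomSup K] [OmegaCpoVee K]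

/-!
Write `α*_h = ⋁ₙ Fₕⁿ(h)` with `Fₕ(x) = h ∨ α ≫ x`. By Kleene's argument `α*_h` lies below every
`u` with `h ≤ u` and `α ≫ u ≤ u`, and this induction principle alone shows that `h ↦ α*_h` is
monotone, continuous and oplax, hence a morphism of `K̃ᵒᵖ`, which contains the identity and `α̂`
and is idempotent. Conversely every `ρ` with these closure properties sends `h` to such a `u`,
so `h ↦ α*_h` is the free monad `α̂*`, and `Θ(î ∘ α̂*) = α*_i`.
-/

namespace OmegaCpoVee

variable {X Y : K}

lemma le_csup {c : ℕ → (X ⟶ Y)} (hc : Monotone c) (n : ℕ) : c n ≤ csup c :=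
  (csup_isLUB c hc).1 ⟨n, rfl⟩

lemma csup_le {c : ℕ → (X ⟶ Y)} (hc : Monotone c) {u : X ⟶ Y} (h : ∀ n, c n ≤ u) :
    csup c ≤ u :=
  (csup_isLUB c hc).2 (by rintro _ ⟨n, rfl⟩; exact h n)

lemma csup_le_csup {c d : ℕ → (X ⟶ Y)} (hc : Monotone c) (hd : Monotone d)
    (h : ∀ n, c n ≤ d n) : csup c ≤ csup d :=
  csup_le hc fun n => (h n).trans (le_csup hd n)

end OmegaCpoVee

section LeastSolution

variable {X Z : K} (α : X ⟶ X)

def leastSolution (h : X ⟶ Z) : X ⟶ Z :=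
  csup fun n => (fun x : X ⟶ Z => h ⊔ α ≫ x)^[n] h

lemma monotone_sup_comp (h : X ⟶ Z) : Monotone fun x : X ⟶ Z => h ⊔ α ≫ x :=
  fun _ _ hxy => sup_le_sup le_rfl (comp_mono le_rfl hxy)

lemma monotone_iterate_sup_comp (h : X ⟶ Z) :
    Monotone fun n => (fun x : X ⟶ Z => h ⊔ α ≫ x)^[n] h :=
  (monotone_sup_comp α h).monotone_iterate_of_le_map le_sup_left

variable {α}

lemma iterate_sup_comp_le_leastSolution (h : X ⟶ Z) (n : ℕ) :
    (fun x : X ⟶ Z => h ⊔ α ≫ x)^[n] h ≤ leastSolution α h :=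
  le_csup (monotone_iterate_sup_comp α h) n

lemma leastSolution_le {h u : X ⟶ Z} (hu : h ≤ u) (hαu : α ≫ u ≤ u) :
    leastSolution α h ≤ u := by
  have hF := monotone_sup_comp α h
  refine csup_le (monotone_iterate_sup_comp α h) fun n => ?_
  exact (hF.iterate n hu).trans (hF.antitone_iterate_of_map_le (sup_le hu hαu) (Nat.zero_le n))

lemma le_leastSolution (h : X ⟶ Z) : h ≤ leastSolution α h :=
  iterate_sup_comp_le_leastSolution h 0

lemma comp_leastSolution_le (h : X ⟶ Z) : α ≫ leastSolution α h ≤ leastSolution α h := by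
  rw [leastSolution, comp_csup _ _ (monotone_iterate_sup_comp α h)]
  refine csup_le (fun _ _ hmn => comp_mono le_rfl (monotone_iterate_sup_comp α h hmn)) fun n => ?_
  refine le_trans ?_ (iterate_sup_comp_le_leastSolution h (n + 1))
  rw [Function.iterate_succ_apply']
  exact le_sup_right

lemma leastSolution_mono : Monotone (leastSolution (Z := Z) α) := fun _ h' hh' =>
  leastSolution_le (hh'.trans (le_leastSolution h')) (comp_leastSolution_le h')

lemma leastSolution_csup (c : ℕ → (X ⟶ Z)) (hc : Monotone c) :
    leastSolution α (csup c) = csup fun n => leastSolution α (c n) := by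
  have hsol : Monotone fun n => leastSolution α (c n) := leastSolution_mono.comp hc
  refine le_antisymm (leastSolution_le ?_ ?_)
    (csup_le hsol fun n => leastSolution_mono (le_csup hc n))
  · exact csup_le_csup hc hsol fun n => le_leastSolution (c n)
  · rw [comp_csup _ _ hsol]
    exact csup_le_csup (fun _ _ hmn => comp_mono le_rfl (hsol hmn)) hsol
      fun n => comp_leastSolution_le (c n)

lemma leastSolution_comp_le {Z' : K} (f : Z ⟶ Z') (g : X ⟶ Z) :
    leastSolution α (g ≫ f) ≤ leastSolution α g ≫ f := by
  refine leastSolution_le (comp_mono (le_leastSolution g) le_rfl) ?_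
  rw [← Category.assoc]
  exact comp_mono (comp_leastSolution_le g) le_rfl

lemma leastSolution_leastSolution (h : X ⟶ Z) :
    leastSolution α (leastSolution α h) = leastSolution α h :=
  le_antisymm (leastSolution_le le_rfl (comp_leastSolution_le h)) (le_leastSolution _)

end LeastSolution

section Saturation

variable {X : K} (α : X ⟶ X)

/-- The free monad `α̂*` over `α̂` in `K̃ᵒᵖ`. -/
def saturation : RepOplax K X X where
  app _ := leastSolution α
  mono _ := leastSolution_mono
  cont _ := leastSolution_csup
  oplax := leastSolution_comp_le

lemma idT_le_saturation : (RepOplax.idT X).le (saturation α) :=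
  fun _ => le_leastSolution

lemma saturation_comp_le : ((saturation α).comp (saturation α)).le (saturation α) :=
  fun _ h => (leastSolution_leastSolution h).le

lemma hat_le_saturation : (hat α).le (saturation α) := fun _ h =>
  (comp_mono le_rfl (le_leastSolution h)).trans (comp_leastSolution_le h)

variable {α}

lemma saturation_le {ρ : RepOplax K X X} (hid : (RepOplax.idT X).le ρ) (hcomp : (ρ.comp ρ).le ρ)
    (hhat : (hat α).le ρ) : (saturation α).le ρ := fun Z h =>
  leastSolution_le (hid Z h) ((hhat Z _).trans (hcomp Z h))

end Saturation

/-- The components of `î ∘ α̂*` are `h ↦ ρ.app Z (i ≫ h)`, so `Θ(î ∘ α̂*) = ρ.app Y (i ≫ 𝟙 Y)`. -/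
theorem theta_of_saturation_eq_least_solution
    {X Y : K} (α : X ⟶ X) (i : X ⟶ Y)
    (ρ : RepOplax K X X)
    (hρ : (RepOplax.idT X).le ρ ∧ (ρ.comp ρ).le ρ ∧ (hat α).le ρ ∧
      ∀ σ : RepOplax K X X,
        (RepOplax.idT X).le σ → (σ.comp σ).le σ → (hat α).le σ → ρ.le σ) :
    ρ.app Y (i ≫ 𝟙 Y) = csup (fun n => (fun x : X ⟶ Y => i ⊔ α ≫ x)^[n] i) ∧
    ((∃ β : Y ⟶ Y, ρ.app Y (i ≫ 𝟙 Y) = i ≫ β) ↔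
      (∃ β : Y ⟶ Y, csup (fun n => (fun x : X ⟶ Y => i ⊔ α ≫ x)^[n] i) = i ≫ β)) := by
  obtain ⟨hid, hcomp, hhat, hmin⟩ := hρ
  have hΘ : ρ.app Y (i ≫ 𝟙 Y) = leastSolution α i := by
    rw [Category.comp_id]
    exact le_antisymm
      (hmin (saturation α) (idT_le_saturation α) (saturation_comp_le α) (hat_le_saturation α) Y i)
      (saturation_le hid hcomp hhat Y i)
  exact ⟨hΘ, by rw [hΘ]; rfl⟩
end

section
/- Let A be a set and A_τ = A + {τ}. Define on the functor X ↦ P(A_τ × X) the monad structure with unit η_X(x) = {(τ,x)} and Kleisli composition (g • f)(x) = {(a,z) | ∃y, ((a,y) ∈ f(x) ∧ (τ,z) ∈ g(y)) ∨ ((τ,y) ∈ f(x) ∧ (a,z) ∈ g(y))}. Then this composition is associative with η as two-sided unit, so P(A_τ × −) is a monad on Set; moreover its Kleisli category, ordered pointwise by inclusion, is ω-Cpo∨-enriched and satisfies left and right distributivity. -/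
universe u

variable {A : Type u}

/-- Unobservable label: `A_τ = A + {τ}`, with `τ = none`. -/
abbrev Atau (A : Type u) := Option A

/-- The unit of the LTS monad `P(A_τ × −)`: `η_X(x) = {(τ, x)}`. -/
def ltsUnit (A : Type u) (X : Type u) : X → Set (Atau A × X) :=
  fun x => {(none, x)}

/-- Kleisli composition for `P(A_τ × −)`:
`(g • f)(x) = {(a,z) | ∃ y, ((a,y) ∈ f(x) ∧ (τ,z) ∈ g(y)) ∨ ((τ,y) ∈ f(x) ∧ (a,z) ∈ g(y))}`. -/
def ltsComp {X Y Z : Type u}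
    (g : Y → Set (Atau A × Z)) (f : X → Set (Atau A × Y)) : X → Set (Atau A × Z) :=
  fun x => {p | ∃ y : Y,
    ((p.1, y) ∈ f x ∧ (none, p.2) ∈ g y) ∨ ((none, y) ∈ f x ∧ (p.1, p.2) ∈ g y)}

/-- the composition above is associative with `η` as two-sided unit, so
`P(A_τ × −)` is a monad on `Set`; moreover its Kleisli category, ordered by pointwise
inclusion, is ω-Cpo∨-enriched (composition is monotone and preserves pointwise suprema of
ascending ω-chains in each argument) and satisfies left and right distributivity. -/
theorem ltsMonad_laws_and_enrichment :
    (∀ (X Y Z W : Type u) (f : X → Set (Atau A × Y)) (g : Y → Set (Atau A × Z))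
        (h : Z → Set (Atau A × W)),
      ltsComp h (ltsComp g f) = ltsComp (ltsComp h g) f) ∧
    (∀ (X Y : Type u) (f : X → Set (Atau A × Y)), ltsComp f (ltsUnit A X) = f) ∧
    (∀ (X Y : Type u) (f : X → Set (Atau A × Y)), ltsComp (ltsUnit A Y) f = f) ∧
    (∀ (X Y Z : Type u) (f f' : X → Set (Atau A × Y)) (g g' : Y → Set (Atau A × Z)),
      f ≤ f' → g ≤ g' → ltsComp g f ≤ ltsComp g' f') ∧
    (∀ (X Y Z : Type u) (f f' : X → Set (Atau A × Y)) (g : Y → Set (Atau A × Z)),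
      ltsComp g (f ⊔ f') = ltsComp g f ⊔ ltsComp g f') ∧
    (∀ (X Y Z : Type u) (f : X → Set (Atau A × Y)) (g g' : Y → Set (Atau A × Z)),
      ltsComp (g ⊔ g') f = ltsComp g f ⊔ ltsComp g' f) ∧
    (∀ (X Y Z : Type u) (c : ℕ → (X → Set (Atau A × Y))) (g : Y → Set (Atau A × Z)),
      Monotone c → ltsComp g (⨆ n, c n) = ⨆ n, ltsComp g (c n)) ∧
    (∀ (X Y Z : Type u) (f : X → Set (Atau A × Y)) (c : ℕ → (Y → Set (Atau A × Z))),
      Monotone c → ltsComp (⨆ n, c n) f = ⨆ n, ltsComp (c n) f) := by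
  refine ⟨?_, ?_, ?_, ?_, ?_, ?_, ?_, ?_⟩
  · intro X Y Z W f g h
    funext x; ext ⟨a, w⟩
    simp only [ltsComp, Set.mem_setOf_eq]
    constructor
    · rintro ⟨z, ⟨⟨y, ⟨h1, h2⟩ | ⟨h1, h2⟩⟩, h3⟩ | ⟨⟨y, ⟨h1, h2⟩ | ⟨h1, h2⟩⟩, h3⟩⟩
      exacts [⟨y, Or.inl ⟨h1, z, Or.inl ⟨h2, h3⟩⟩⟩,
        ⟨y, Or.inr ⟨h1, z, Or.inl ⟨h2, h3⟩⟩⟩,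
        ⟨y, Or.inr ⟨h1, z, Or.inr ⟨h2, h3⟩⟩⟩,
        ⟨y, Or.inr ⟨h1, z, Or.inr ⟨h2, h3⟩⟩⟩]
    · rintro ⟨y, ⟨h1, z, ⟨h2, h3⟩ | ⟨h2, h3⟩⟩ | ⟨h1, z, ⟨h2, h3⟩ | ⟨h2, h3⟩⟩⟩
      exacts [⟨z, Or.inl ⟨⟨y, Or.inl ⟨h1, h2⟩⟩, h3⟩⟩,
        ⟨z, Or.inl ⟨⟨y, Or.inl ⟨h1, h2⟩⟩, h3⟩⟩,
        ⟨z, Or.inl ⟨⟨y, Or.inr ⟨h1, h2⟩⟩, h3⟩⟩,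
        ⟨z, Or.inr ⟨⟨y, Or.inr ⟨h1, h2⟩⟩, h3⟩⟩]
  · intro X Y f
    funext x; ext ⟨a, y⟩
    simp only [ltsComp, ltsUnit, Set.mem_setOf_eq, Set.mem_singleton_iff, Prod.mk.injEq]
    constructor
    · rintro ⟨y', ⟨⟨h1, h2⟩, h3⟩ | ⟨⟨h1, h2⟩, h3⟩⟩ <;> subst h2 <;> simp_all
    · intro h; exact ⟨x, Or.inr ⟨⟨trivial, rfl⟩, h⟩⟩
  · intro X Y f
    funext x; ext ⟨a, y⟩
    simp only [ltsComp, ltsUnit, Set.mem_setOf_eq, Set.mem_singleton_iff, Prod.mk.injEq]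
    constructor
    · rintro ⟨y', ⟨h1, h2, h3⟩ | ⟨h1, h2, h3⟩⟩ <;> subst h3 <;> simp_all
    · intro h; exact ⟨y, Or.inl ⟨h, trivial, rfl⟩⟩
  · intro X Y Z f f' g g' hf hg x p
    rintro ⟨y, ⟨h1, h2⟩ | ⟨h1, h2⟩⟩
    · exact ⟨y, Or.inl ⟨hf x h1, hg y h2⟩⟩
    · exact ⟨y, Or.inr ⟨hf x h1, hg y h2⟩⟩
  · intro X Y Z f f' g
    funext x; ext p
    simp only [ltsComp, Set.mem_setOf_eq, Pi.sup_apply, Set.sup_eq_union, Set.mem_union]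
    constructor
    · rintro ⟨y, ⟨h1 | h1, h2⟩ | ⟨h1 | h1, h2⟩⟩
      exacts [Or.inl ⟨y, Or.inl ⟨h1, h2⟩⟩, Or.inr ⟨y, Or.inl ⟨h1, h2⟩⟩,
        Or.inl ⟨y, Or.inr ⟨h1, h2⟩⟩, Or.inr ⟨y, Or.inr ⟨h1, h2⟩⟩]
    · rintro (⟨y, ⟨h1, h2⟩ | ⟨h1, h2⟩⟩ | ⟨y, ⟨h1, h2⟩ | ⟨h1, h2⟩⟩)
      exacts [⟨y, Or.inl ⟨Or.inl h1, h2⟩⟩, ⟨y, Or.inr ⟨Or.inl h1, h2⟩⟩,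
        ⟨y, Or.inl ⟨Or.inr h1, h2⟩⟩, ⟨y, Or.inr ⟨Or.inr h1, h2⟩⟩]
  · intro X Y Z f g g'
    funext x; ext p
    simp only [ltsComp, Set.mem_setOf_eq, Pi.sup_apply, Set.sup_eq_union, Set.mem_union]
    constructor
    · rintro ⟨y, ⟨h1, h2 | h2⟩ | ⟨h1, h2 | h2⟩⟩
      exacts [Or.inl ⟨y, Or.inl ⟨h1, h2⟩⟩, Or.inr ⟨y, Or.inl ⟨h1, h2⟩⟩,
        Or.inl ⟨y, Or.inr ⟨h1, h2⟩⟩, Or.inr ⟨y, Or.inr ⟨h1, h2⟩⟩]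
    · rintro (⟨y, ⟨h1, h2⟩ | ⟨h1, h2⟩⟩ | ⟨y, ⟨h1, h2⟩ | ⟨h1, h2⟩⟩)
      exacts [⟨y, Or.inl ⟨h1, Or.inl h2⟩⟩, ⟨y, Or.inr ⟨h1, Or.inl h2⟩⟩,
        ⟨y, Or.inl ⟨h1, Or.inr h2⟩⟩, ⟨y, Or.inr ⟨h1, Or.inr h2⟩⟩]
  · intro X Y Z c g _
    funext x; ext p
    simp only [ltsComp, Set.mem_setOf_eq, iSup_apply, Set.iSup_eq_iUnion, Set.mem_iUnion]
    constructor
    · rintro ⟨y, ⟨⟨n, h1⟩, h2⟩ | ⟨⟨n, h1⟩, h2⟩⟩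
      exacts [⟨n, y, Or.inl ⟨h1, h2⟩⟩, ⟨n, y, Or.inr ⟨h1, h2⟩⟩]
    · rintro ⟨n, y, ⟨h1, h2⟩ | ⟨h1, h2⟩⟩
      exacts [⟨y, Or.inl ⟨⟨n, h1⟩, h2⟩⟩, ⟨y, Or.inr ⟨⟨n, h1⟩, h2⟩⟩]
  · intro X Y Z f c _
    funext x; ext p
    simp only [ltsComp, Set.mem_setOf_eq, iSup_apply, Set.iSup_eq_iUnion, Set.mem_iUnion]
    constructor
    · rintro ⟨y, ⟨h1, n, h2⟩ | ⟨h1, n, h2⟩⟩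
      exacts [⟨n, y, Or.inl ⟨h1, h2⟩⟩, ⟨n, y, Or.inr ⟨h1, h2⟩⟩]
    · rintro ⟨n, y, ⟨h1, h2⟩ | ⟨h1, h2⟩⟩
      exacts [⟨y, Or.inl ⟨h1, n, h2⟩⟩, ⟨y, Or.inr ⟨h1, n, h2⟩⟩]
end

section
/- The assignment (X,Σ_X) ↦ Δ(X,Σ_X) (the space of measures with the σ-algebra generated by the evaluation maps ev_M : φ ↦ φ(M)), Δf(φ) = φ ∘ f⁻¹, carries a monad structure on Meas with unit η_X(x) = δ_x (Dirac measure) and multiplication μ_X(φ)(M) = ∫_{Δ(X,Σ_X)} ev_M dφ; i.e., the monad unit and associativity laws hold, and μ and η are measurable natural transformations. -/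
open MeasureTheory

/-- the assignment `(X,Σ_X) ↦ Δ(X,Σ_X)` — the space of `[0,∞]`-valued
measures with the σ-algebra generated by the evaluation maps — with `Δf(φ) = φ ∘ f⁻¹`,
carries a monad structure on `Meas` with unit `η_X(x) = δ_x` and multiplication
`μ_X(φ)(M) = ∫ ev_M dφ`: unit and multiplication are measurable and natural, the
multiplication is given by the integral formula, and the monad unit and associativity
laws hold. -/
theorem measure_monad_on_Meas :
    (∀ (α : Type) [MeasurableSpace α],
      Measurable (Measure.dirac : α → Measure α)) ∧
    (∀ (α : Type) [MeasurableSpace α],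
      Measurable (Measure.join : Measure (Measure α) → Measure α)) ∧
    (∀ (α : Type) [MeasurableSpace α] (m : Measure (Measure α)) (s : Set α),
      MeasurableSet s → m.join s = ∫⁻ μ, μ s ∂m) ∧
    (∀ (α β : Type) [MeasurableSpace α] [MeasurableSpace β] (f : α → β),
      Measurable f → ∀ x : α, Measure.map f (Measure.dirac x) = Measure.dirac (f x)) ∧
    (∀ (α β : Type) [MeasurableSpace α] [MeasurableSpace β] (f : α → β),
      Measurable f → ∀ m : Measure (Measure α),
        Measure.map f m.join = (Measure.map (Measure.map f) m).join) ∧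
    (∀ (α : Type) [MeasurableSpace α] (m : Measure α), (Measure.dirac m).join = m) ∧
    (∀ (α : Type) [MeasurableSpace α] (m : Measure α),
      (Measure.map Measure.dirac m).join = m) ∧
    (∀ (α : Type) [MeasurableSpace α] (M : Measure (Measure (Measure α))),
      M.join.join = (Measure.map Measure.join M).join) := by
  refine ⟨fun α _ => Measure.measurable_dirac,
    fun α _ => Measure.measurable_join,
    fun α _ m s hs => Measure.join_apply hs,
    fun α β _ _ f hf x => Measure.map_dirac' hf x,
    fun α β _ _ f hf m => (Measure.join_map_map hf m).symm,
    fun α _ m => Measure.join_dirac m,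
    fun α _ m => Measure.join_map_dirac m,
    fun α _ M => (Measure.join_map_join M).symm⟩
end
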